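/- arXiv:1203.2693 — 2 statements merged into one kernel-verified Lean document; each statement's English description precedes it below -/
import Mathlib

section
/- One has lim_{j→∞} (e/log(j+1)) · sup_{t∈(0,1)} H_j(t) = 1; that is, the maximum of H_j over (0,1) is asymptotic to (1/e)·log(j+1) as j → ∞. -/
/-!
Substituting `v = (j - 1)(1 - t)` and using `t ^ (j - 1) ≤ exp (-v)` gives
`H_j t ≤ j / (j - 1) · v e^{-v} log (3 (j - 1) / v)`, and `v e^{-v} ≤ 1/e`, `-v log v ≤ 1/e` bound this
by `j / (j - 1) · (log (3 (j - 1)) + 1) / e`. Conversely `H_j (1 - 1/j) = (1 - 1/j)^(j-1) log (3 j)`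
and `(1 - 1/j)^(j-1) ≥ 1/e`. Both bounds are `(1/e) log j + O(1)`.
-/

open Filter Real Set Topology

noncomputable def H (j : ℕ) (t : ℝ) : ℝ := j * t ^ (j - 1) * (1 - t) * log (3 / (1 - t))

lemma log_le_div_exp_one {y : ℝ} (hy : 0 < y) : log y ≤ y / exp 1 := by
  have h := log_le_sub_one_of_pos (show 0 < y / exp 1 by positivity)
  rw [log_div hy.ne' (exp_ne_zero 1), log_exp] at h
  linarith

lemma mul_exp_neg_mul_log_div_le {c v : ℝ} (hc : 1 ≤ c) (hv : 0 < v) :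
    v * exp (-v) * log (c / v) ≤ (log c + 1) / exp 1 := by
  have hlog : log (c / v) ≤ log c + v⁻¹ / exp 1 := by
    rw [log_div (by positivity) hv.ne', sub_eq_add_neg, ← log_inv]
    linarith [log_le_div_exp_one (inv_pos.mpr hv)]
  have hve : v * exp (-v) ≤ exp (-1) := mul_exp_neg_le_exp_neg_one v
  have hexp : exp (-v) ≤ 1 := exp_le_one_iff.mpr (by linarith)
  calc v * exp (-v) * log (c / v) ≤ v * exp (-v) * (log c + v⁻¹ / exp 1) := by gcongr
    _ = v * exp (-v) * log c + exp (-v) / exp 1 := by field_simp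
    _ ≤ exp (-1) * log c + 1 / exp 1 := by gcongr; exact log_nonneg hc
    _ = (log c + 1) / exp 1 := by rw [exp_neg]; field_simp

lemma pow_le_exp_neg_mul_one_sub {t : ℝ} (ht : 0 ≤ t) (n : ℕ) : t ^ n ≤ exp (-(n * (1 - t))) := by
  calc t ^ n ≤ exp (-(1 - t)) ^ n := by
        gcongr; linarith [add_one_le_exp (-(1 - t))]
    _ = exp (-(n * (1 - t))) := by rw [← exp_nat_mul]; ring_nf

lemma H_le {j : ℕ} (hj : 2 ≤ j) {t : ℝ} (ht : t ∈ Ioo 0 1) :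
    H j t ≤ j / (j - 1) * ((log (3 * (j - 1)) + 1) / exp 1) := by
  obtain ⟨ht0, ht1⟩ := ht
  have hJ : (1 : ℝ) ≤ j - 1 := by
    have : (2 : ℝ) ≤ j := by exact_mod_cast hj
    linarith
  have hJ0 : (j : ℝ) - 1 ≠ 0 := by linarith
  set v := ((j : ℝ) - 1) * (1 - t) with hv
  have hv0 : 0 < v := mul_pos (by linarith) (by linarith)
  have hpow : t ^ (j - 1) ≤ exp (-v) := by
    simpa [hv, Nat.cast_sub (by omega : 1 ≤ j)] using pow_le_exp_neg_mul_one_sub ht0.le (j - 1)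
  have hH : H j t = j / (j - 1) * (v * t ^ (j - 1) * log (3 * (j - 1) / v)) := by
    have : (3 : ℝ) * (j - 1) / v = 3 / (1 - t) := by
      rw [hv]; field_simp
    rw [H, this, hv]; field_simp
  have hlog : 0 ≤ log (3 * (j - 1) / v) :=
    log_nonneg (by rw [le_div_iff₀ hv0, hv]; nlinarith)
  rw [hH]
  gcongr
  calc v * t ^ (j - 1) * log (3 * (j - 1) / v) ≤ v * exp (-v) * log (3 * (j - 1) / v) := by gcongr
    _ ≤ _ := mul_exp_neg_mul_log_div_le (by linarith) hv0

lemma H_one_sub_inv {j : ℕ} (hj : 1 ≤ j) :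
    H j (1 - (j : ℝ)⁻¹) = (1 - (j : ℝ)⁻¹) ^ (j - 1) * log (3 * j) := by
  have hJ : (j : ℝ) ≠ 0 := by positivity
  rw [H, sub_sub_cancel, div_inv_eq_mul]
  field_simp

lemma exp_neg_one_le_one_sub_inv_pow_pred {j : ℕ} (hj : 1 ≤ j) :
    exp (-1) ≤ (1 - (j : ℝ)⁻¹) ^ (j - 1) := by
  obtain ⟨n, rfl⟩ := Nat.exists_eq_add_of_le' hj
  rcases n.eq_zero_or_pos with rfl | hn
  · simp
  have hpow : (1 - ((n + 1 : ℕ) : ℝ)⁻¹) ^ (n + 1 - 1) = ((1 + (n : ℝ)⁻¹) ^ n)⁻¹ := by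
    rw [Nat.add_sub_cancel, ← inv_pow]
    congr 1
    field_simp
    push_cast
    ring
  rw [hpow, exp_neg]
  exact inv_anti₀ (by positivity) one_add_inv_pow_le_exp

lemma bddAbove_H_image {j : ℕ} (hj : 2 ≤ j) : BddAbove (H j '' Ioo 0 1) :=
  ⟨_, forall_mem_image.2 fun _ ht => H_le hj ht⟩

lemma sSup_H_le {j : ℕ} (hj : 2 ≤ j) :
    sSup (H j '' Ioo 0 1) ≤ j / (j - 1) * ((log (3 * (j - 1)) + 1) / exp 1) :=
  csSup_le ((nonempty_Ioo.mpr one_pos).image _) (forall_mem_image.2 fun _ ht => H_le hj ht)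

lemma exp_neg_one_mul_log_le_sSup_H {j : ℕ} (hj : 2 ≤ j) :
    exp (-1) * log (3 * j) ≤ sSup (H j '' Ioo 0 1) := by
  have hJ : (2 : ℝ) ≤ j := by exact_mod_cast hj
  have hmem : 1 - (j : ℝ)⁻¹ ∈ Ioo (0 : ℝ) 1 := by
    have : (j : ℝ)⁻¹ < 1 := inv_lt_one_of_one_lt₀ (by linarith)
    constructor <;> simp <;> linarith [inv_pos.mpr (by linarith : (0 : ℝ) < j)]
  calc exp (-1) * log (3 * j) ≤ (1 - (j : ℝ)⁻¹) ^ (j - 1) * log (3 * j) := by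
        gcongr
        · exact log_nonneg (by linarith)
        · exact exp_neg_one_le_one_sub_inv_pow_pred (by omega)
    _ = H j (1 - (j : ℝ)⁻¹) := (H_one_sub_inv (by omega)).symm
    _ ≤ sSup (H j '' Ioo 0 1) := le_csSup (bddAbove_H_image hj) (mem_image_of_mem _ hmem)

lemma tendsto_log_add_div_log_of_tendsto_div {α : Type*} {l : Filter α} {f g : α → ℝ} {c : ℝ}
    (b : ℝ) (hc : 0 < c) (hfg : Tendsto (fun x => f x / g x) l (𝓝 c)) (hg : Tendsto g l atTop) :
    Tendsto (fun x => (log (f x) + b) / log (g x)) l (𝓝 1) := by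
  have hlog : Tendsto (fun x => log (g x)) l atTop := tendsto_log_atTop.comp hg
  have hrest : Tendsto (fun x => (log (f x / g x) + b) / log (g x)) l (𝓝 0) :=
    (((continuousAt_log hc.ne').tendsto.comp hfg).add_const b).div_atTop hlog
  have hpos : ∀ᶠ x in l, 0 < f x / g x ∧ 1 < g x :=
    (hfg.eventually (lt_mem_nhds hc)).and (hg.eventually_gt_atTop 1)
  rw [← add_zero (1 : ℝ)]
  refine (hrest.const_add 1).congr' (hpos.mono fun x ⟨hq, hg1⟩ => ?_)
  have hg0 : 0 < g x := by linarith
  have hf0 : 0 < f x := (div_pos_iff_of_pos_right hg0).mp hq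
  have : log (g x) ≠ 0 := (log_pos hg1).ne'
  rw [log_div hf0.ne' hg0.ne']
  field_simp
  ring

lemma tendsto_natCast_add_one_atTop : Tendsto (fun j : ℕ => (j : ℝ) + 1) atTop atTop :=
  tendsto_atTop_add_const_right _ 1 tendsto_natCast_atTop_atTop

lemma tendsto_log_three_mul_div_log_add_one :
    Tendsto (fun j : ℕ => log (3 * j) / log (j + 1)) atTop (𝓝 1) := by
  simpa using tendsto_log_add_div_log_of_tendsto_div 0 three_pos (by
    simpa [add_comm] using tendsto_add_mul_div_add_mul_atTop_nhds (0 : ℝ) 1 3 one_ne_zero)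
    tendsto_natCast_add_one_atTop

lemma tendsto_sSup_H_bound_div_log :
    Tendsto (fun j : ℕ => j / (j - 1) * ((log (3 * (j - 1)) + 1) / log (j + 1))) atTop (𝓝 1) := by
  have hfrac : Tendsto (fun j : ℕ => (j : ℝ) / (j - 1)) atTop (𝓝 1) := by
    simpa [neg_add_eq_sub] using tendsto_add_mul_div_add_mul_atTop_nhds (0 : ℝ) (-1) 1 one_ne_zero
  have hlog := tendsto_log_add_div_log_of_tendsto_div (f := fun j : ℕ => 3 * ((j : ℝ) - 1))
    1 three_pos (by
      simpa [add_comm, mul_sub, ← sub_eq_add_neg] using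
        tendsto_add_mul_div_add_mul_atTop_nhds (-3 : ℝ) 1 3 one_ne_zero)
    tendsto_natCast_add_one_atTop
  simpa using hfrac.mul hlog

/-- One has `lim_(j→∞) (e / log (j+1)) * sup_(t ∈ (0,1)) H_j t = 1`, where
`H_j t = j * t^(j-1) * (1-t) * log (3/(1-t))`; that is, the maximum of `H_j`
over `(0,1)` is asymptotic to `(1/e) * log (j+1)` as `j → ∞`. -/
theorem stmt_7 :
    Filter.Tendsto
      (fun j : ℕ => Real.exp 1 / Real.log ((j : ℝ) + 1) *
        sSup ((fun t : ℝ => (j : ℝ) * t ^ (j - 1) * (1 - t) * Real.log (3 / (1 - t))) ''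
          Set.Ioo (0 : ℝ) 1))
      Filter.atTop (nhds 1) := by
  refine tendsto_of_tendsto_of_tendsto_of_le_of_le' tendsto_log_three_mul_div_log_add_one
    tendsto_sSup_H_bound_div_log ?_ ?_ <;>
    filter_upwards [eventually_ge_atTop 2] with j hj <;>
    have hlog : 0 < log ((j : ℝ) + 1) := log_pos (by norm_cast; omega)
  · calc log (3 * j) / log (j + 1) = exp 1 / log (j + 1) * (exp (-1) * log (3 * j)) := by
          rw [exp_neg]; field_simp
      _ ≤ _ := by gcongr; exact exp_neg_one_mul_log_le_sSup_H hj
  · calc _ ≤ exp 1 / log (j + 1) * (j / (j - 1) * ((log (3 * (j - 1)) + 1) / exp 1)) := by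
          gcongr; exact sSup_H_le hj
      _ = _ := by field_simp
end

section
/- Let μ be a weight on 𝔻, let φ be a holomorphic self-map of 𝔻, let l ≥ 1 be an integer such that ‖F_m‖_log < (3/(2e))·log(m+1) for every integer m ≥ l, and let B ∈ ℝ satisfy ‖φ^m‖_μ ≤ B·‖F_m‖_log for every integer m ≥ l. Then for every ρ ∈ [0,1], every holomorphic function f on 𝔻 with |f(0)| + ‖f‖_log ≤ 1, and every z ∈ 𝔻 with |φ(z)| > r_l, one has μ(z)·|f′(ρ·φ(z))|·|φ′(z)| ≤ (3·e^{L−1}/L)·B. -/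
/-!
Put `s = |φ z|` and choose `m` with `m + L ≤ L / (1 - s) < m + 1 + L`; the hypothesis
`s > r_l` forces `m ≥ l`. Then `s ^ (m - 1) ≥ e^(-L)`, `L s ≤ 2 m (1 - s)` and
`(m + 1)(1 - s) ≤ 1`, which combine to
`(3 / (2e)) log (m + 1) ≤ (3 e^(L-1) / L) K` with `K = v_log(s) m s^(m-1) ≤ ‖F_m‖_log`.
Since `v_log` is decreasing in `|w|`, the Bloch bound on `f` gives `v_log(s) |f' (ρ φ z)| ≤ 1`, so
`μ z |f' (ρ φ z)| |φ' z| K ≤ μ z m s^(m-1) |φ' z| ≤ B ‖F_m‖_log ≤ (3 e^(L-1) / L) B K`.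
-/

open Real

lemma one_lt_log_three : 1 < log 3 := by
  have := log_three_gt_d9
  linarith

lemma one_sub_inv_log_three_pos : 0 < 1 - 1 / log 3 := by
  rw [sub_pos, div_lt_one (by linarith [one_lt_log_three])]
  exact one_lt_log_three

lemma one_sub_inv_log_three_le_one : 1 - 1 / log 3 ≤ 1 :=
  sub_le_self _ (div_nonneg zero_le_one (by linarith [one_lt_log_three]))

noncomputable def vLog (t : ℝ) : ℝ := (1 - t) * log (3 / (1 - t))

lemma mul_log_three_div_eq_add_negMulLog (p : ℝ) :
    p * log (3 / p) = p * log 3 + negMulLog p := by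
  rcases eq_or_ne p 0 with rfl | hp
  · simp
  · rw [log_div (by norm_num) hp, negMulLog]
    ring

lemma monotoneOn_mul_log_three_div :
    MonotoneOn (fun p : ℝ => p * log (3 / p)) (Set.Icc 0 1) := by
  simp only [mul_log_three_div_eq_add_negMulLog]
  have hderiv : ∀ p ∈ Set.Ioo (0 : ℝ) 1,
      HasDerivAt (fun p => p * log 3 + negMulLog p) (log 3 + (-log p - 1)) p := fun p hp =>
    (hasDerivAt_mul_const (log 3)).add (hasDerivAt_negMulLog hp.1.ne')
  refine monotoneOn_of_deriv_nonneg (convex_Icc 0 1) (by fun_prop) ?_ ?_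
  all_goals rw [interior_Icc]
  · exact fun p hp => (hderiv p hp).differentiableAt.differentiableWithinAt
  · intro p hp
    rw [(hderiv p hp).deriv]
    linarith [log_neg hp.1 hp.2, one_lt_log_three]

lemma antitoneOn_vLog : AntitoneOn vLog (Set.Icc 0 1) := fun a ha b hb hab =>
  monotoneOn_mul_log_three_div ⟨by linarith [hb.2], by linarith [hb.1]⟩
    ⟨by linarith [ha.2], by linarith [ha.1]⟩ (by linarith)

lemma vLog_le_log_three {t : ℝ} (ht : t ∈ Set.Icc 0 1) : vLog t ≤ log 3 := by
  simpa [vLog] using antitoneOn_vLog ⟨le_rfl, zero_le_one⟩ ht ht.1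

lemma vLog_pos {t : ℝ} (ht0 : 0 ≤ t) (ht : t < 1) : 0 < vLog t :=
  mul_pos (by linarith) (log_pos ((lt_div_iff₀ (by linarith)).2 (by linarith)))

lemma log_le_mul_log_three_div {x s : ℝ} (hx : 0 < x) (hs0 : 0 ≤ s) (hs1 : s < 1)
    (hxs : x * (1 - s) ≤ 1) : log x ≤ s * log (3 / (1 - s)) := by
  have hu : 0 < 1 - s := by linarith
  have hlog : log x ≤ -log (1 - s) := by
    rw [← log_inv, inv_eq_one_div]
    exact log_le_log hx ((le_div_iff₀ hu).2 hxs)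
  have hneg : negMulLog (1 - s) ≤ s := by linarith [negMulLog_le_one_sub_self hu.le]
  rw [log_div (by norm_num) hu.ne']
  rw [negMulLog] at hneg
  nlinarith [one_lt_log_three]

lemma exp_neg_le_pow {L s : ℝ} {n : ℕ} (hs : 0 < s) (h : n * (1 - s) ≤ L * s) :
    exp (-L) ≤ s ^ n := by
  rw [← exp_log (pow_pos hs n), exp_le_exp, log_pow]
  have h1 := one_sub_inv_le_log_of_pos hs
  have h2 : -L ≤ n * (1 - s⁻¹) := by
    rw [mul_one_sub, ← div_eq_mul_inv, neg_le_sub_iff_le_add, div_le_iff₀ hs]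
    linarith
  linarith [mul_le_mul_of_nonneg_left h1 (Nat.cast_nonneg n)]

lemma exists_nat_add_mul_one_sub_le_lt {L s : ℝ} {l : ℕ} (hL : 0 < L) (hs : 1 - L / (l + L) < s)
    (hs1 : s < 1) :
    ∃ m : ℕ, l ≤ m ∧ (m + L) * (1 - s) ≤ L ∧ L < (m + 1 + L) * (1 - s) := by
  have hu : 0 < 1 - s := by linarith
  have hlL : (l : ℝ) + L < L / (1 - s) :=
    (lt_div_iff₀ hu).2 (by rw [mul_comm]; exact (lt_div_iff₀ (by positivity)).1 (by linarith))
  have hy : (0 : ℝ) ≤ L / (1 - s) - L := by linarith [(Nat.cast_nonneg l : (0 : ℝ) ≤ l)]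
  refine ⟨⌊L / (1 - s) - L⌋₊, Nat.le_floor (by linarith), ?_, ?_⟩
  · exact (le_div_iff₀ hu).1 (by linarith [Nat.floor_le hy])
  · exact (div_lt_iff₀ hu).1 (by linarith [Nat.lt_floor_add_one (L / (1 - s) - L)])

lemma log_succ_le_vLog_mul_pow {L s : ℝ} {m : ℕ} (hL0 : 0 < L) (hL1 : L ≤ 1) (hm : 1 ≤ m)
    (hs0 : 0 ≤ s) (hs1 : s < 1) (hlow : (m + L) * (1 - s) ≤ L)
    (hup : L < (m + 1 + L) * (1 - s)) :
    log (m + 1) ≤ 2 * exp L / L * (vLog s * m * s ^ (m - 1)) := by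
  have hm1 : (1 : ℝ) ≤ m := by exact_mod_cast hm
  have hu : 0 < 1 - s := by linarith
  have hs : 0 < s := by nlinarith
  have hG : 0 ≤ log (3 / (1 - s)) := log_nonneg ((le_div_iff₀ hu).2 (by linarith))
  have hlog : log (m + 1) ≤ s * log (3 / (1 - s)) :=
    log_le_mul_log_three_div (by positivity) hs0 hs1 (by nlinarith)
  have hpow : exp (-L) ≤ s ^ (m - 1) := by
    refine exp_neg_le_pow hs ?_
    have : ((m - 1 : ℕ) : ℝ) ≤ m := Nat.cast_le.2 (Nat.sub_le m 1)
    nlinarith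
  have hLs : L * s ≤ 2 * m * (1 - s) := by nlinarith
  have hsK : s ≤ 2 * exp L / L * ((1 - s) * m * s ^ (m - 1)) := by
    rw [div_mul_eq_mul_div, le_div_iff₀ hL0]
    have hexp : exp L * exp (-L) = 1 := by rw [← exp_add, add_neg_cancel, exp_zero]
    calc s * L ≤ 2 * m * (1 - s) * (exp L * exp (-L)) := by rw [hexp]; linarith
      _ ≤ 2 * m * (1 - s) * (exp L * s ^ (m - 1)) := by gcongr
      _ = 2 * exp L * ((1 - s) * m * s ^ (m - 1)) := by ring
  calc log (m + 1) ≤ s * log (3 / (1 - s)) := hlog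
    _ ≤ 2 * exp L / L * ((1 - s) * m * s ^ (m - 1)) * log (3 / (1 - s)) := by gcongr
    _ = 2 * exp L / L * (vLog s * m * s ^ (m - 1)) := by rw [vLog]; ring

lemma exists_log_succ_le_vLog_mul_pow {L s : ℝ} {l : ℕ} (hL0 : 0 < L) (hL1 : L ≤ 1) (hl : 1 ≤ l)
    (hs : 1 - L / (l + L) < s) (hs1 : s < 1) :
    ∃ m : ℕ, l ≤ m ∧
      3 / (2 * exp 1) * log (m + 1) ≤ 3 * exp (L - 1) / L * (vLog s * m * s ^ (m - 1)) := by
  obtain ⟨m, hlm, hlow, hup⟩ := exists_nat_add_mul_one_sub_le_lt hL0 hs hs1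
  have hs0 : 0 ≤ s := by
    have hl1 : (1 : ℝ) ≤ l := Nat.one_le_cast.2 hl
    have : L / (l + L) ≤ 1 := div_le_one_of_le₀ (by linarith) (by positivity)
    linarith
  refine ⟨m, hlm, ?_⟩
  have hconst : 3 / (2 * exp 1) * (2 * exp L / L) = 3 * exp (L - 1) / L := by
    rw [exp_sub]; field_simp
  rw [← hconst, mul_assoc]
  gcongr
  exact log_succ_le_vLog_mul_pow hL0 hL1 (hl.trans hlm) hs0 hs1 hlow hup

lemma norm_ofReal_mul_le {ρ : ℝ} (hρ : ρ ∈ Set.Icc 0 1) (w : ℂ) : ‖(ρ : ℂ) * w‖ ≤ ‖w‖ := by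
  rw [norm_mul, Complex.norm_real, Real.norm_of_nonneg hρ.1]
  exact mul_le_of_le_one_left (norm_nonneg w) hρ.2

lemma bddAbove_vLog_mul_pow (m : ℕ) :
    BddAbove ((fun z : ℂ => vLog ‖z‖ * m * ‖z‖ ^ (m - 1)) '' Metric.ball 0 1) := by
  refine ⟨log 3 * m, ?_⟩
  rintro _ ⟨z, hz, rfl⟩
  have hz1 : ‖z‖ ∈ Set.Icc 0 1 := ⟨norm_nonneg z, (mem_ball_zero_iff.1 hz).le⟩
  calc vLog ‖z‖ * m * ‖z‖ ^ (m - 1) ≤ log 3 * m * 1 := by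
        gcongr
        · exact vLog_le_log_three hz1
        · exact pow_le_one₀ hz1.1 hz1.2
    _ = log 3 * m := mul_one _

lemma vLog_mul_norm_deriv_le {f : ℂ → ℂ}
    (hf : ∀ z ∈ Metric.ball (0 : ℂ) 1, ‖f 0‖ + vLog ‖z‖ * ‖deriv f z‖ ≤ 1)
    {w : ℂ} {s : ℝ} (hw : w ∈ Metric.ball 0 1) (hws : ‖w‖ ≤ s) (hs : s ≤ 1) :
    vLog s * ‖deriv f w‖ ≤ 1 := by
  have hmono : vLog s ≤ vLog ‖w‖ :=
    antitoneOn_vLog ⟨norm_nonneg w, (mem_ball_zero_iff.1 hw).le⟩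
      ⟨(norm_nonneg w).trans hws, hs⟩ hws
  calc vLog s * ‖deriv f w‖ ≤ vLog ‖w‖ * ‖deriv f w‖ := by gcongr
    _ ≤ 1 := by linarith [hf w hw, norm_nonneg (f 0)]

theorem stmt_13_general
    (L : ℝ) (hL : L = 1 - 1 / Real.log 3)
    (μ : ℂ → ℝ)
    (hμp : ∀ z ∈ Metric.ball (0 : ℂ) 1, 0 < μ z)
    (φ : ℂ → ℂ)
    (hφm : Set.MapsTo φ (Metric.ball (0 : ℂ) 1) (Metric.ball (0 : ℂ) 1))
    (l : ℕ) (hl : 1 ≤ l)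
    (hFm : ∀ m : ℕ, l ≤ m →
      sSup ((fun z : ℂ => (1 - ‖z‖) * Real.log (3 / (1 - ‖z‖)) *
        (m : ℝ) * ‖z‖ ^ (m - 1)) '' Metric.ball (0 : ℂ) 1) <
      (3 / (2 * Real.exp 1)) * Real.log ((m : ℝ) + 1))
    (B : ℝ)
    (hB : ∀ m : ℕ, l ≤ m → ∀ z ∈ Metric.ball (0 : ℂ) 1,
      μ z * m * ‖φ z‖ ^ (m - 1) * ‖deriv φ z‖ ≤
      B * sSup ((fun z : ℂ => (1 - ‖z‖) * Real.log (3 / (1 - ‖z‖)) *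
        (m : ℝ) * ‖z‖ ^ (m - 1)) '' Metric.ball (0 : ℂ) 1)) :
    ∀ ρ ∈ Set.Icc (0 : ℝ) 1, ∀ f : ℂ → ℂ,
      DifferentiableOn ℂ f (Metric.ball (0 : ℂ) 1) →
      (∀ z ∈ Metric.ball (0 : ℂ) 1,
        ‖f 0‖ + (1 - ‖z‖) * Real.log (3 / (1 - ‖z‖)) *
          ‖deriv f z‖ ≤ 1) →
      ∀ z ∈ Metric.ball (0 : ℂ) 1, 1 - L / ((l : ℝ) + L) < ‖φ z‖ →
        μ z * ‖deriv f ((ρ : ℂ) * φ z)‖ * ‖deriv φ z‖ ≤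
        (3 * Real.exp (L - 1) / L) * B := by
  intro ρ hρ f _ hf z hz hφz
  have hL0 : 0 < L := hL ▸ one_sub_inv_log_three_pos
  have hL1 : L ≤ 1 := hL ▸ one_sub_inv_log_three_le_one
  have hs1 : ‖φ z‖ < 1 := mem_ball_zero_iff.1 (hφm hz)
  obtain ⟨m, hlm, hlog⟩ := exists_log_succ_le_vLog_mul_pow hL0 hL1 hl hφz hs1
  set S := sSup ((fun z : ℂ => vLog ‖z‖ * m * ‖z‖ ^ (m - 1)) '' Metric.ball 0 1)
  set K := vLog ‖φ z‖ * m * ‖φ z‖ ^ (m - 1)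
  have hKS : K ≤ S := le_csSup (bddAbove_vLog_mul_pow m) ⟨φ z, hφm hz, rfl⟩
  have hK : 0 < K := by
    have hm : (1 : ℝ) ≤ m := by exact_mod_cast hl.trans hlm
    have h0 : 0 < 3 / (2 * exp 1) * log (m + 1) :=
      mul_pos (by positivity) (log_pos (by linarith))
    exact pos_of_mul_pos_right (h0.trans_le hlog) (by positivity)
  have hρφ : ‖(ρ : ℂ) * φ z‖ ≤ ‖φ z‖ := norm_ofReal_mul_le hρ (φ z)
  have hf' : vLog ‖φ z‖ * ‖deriv f (ρ * φ z)‖ ≤ 1 :=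
    vLog_mul_norm_deriv_le hf (mem_ball_zero_iff.2 (hρφ.trans_lt hs1)) hρφ hs1.le
  have hφ' : μ z * m * ‖φ z‖ ^ (m - 1) * ‖deriv φ z‖ ≤ B * S := hB m hlm z hz
  have hφ'0 : 0 ≤ μ z * m * ‖φ z‖ ^ (m - 1) * ‖deriv φ z‖ := by
    have := hμp z hz
    positivity
  have hB0 : 0 ≤ B := nonneg_of_mul_nonneg_left (hφ'0.trans hφ') (hK.trans_le hKS)
  refine le_of_mul_le_mul_right ?_ hK
  calc μ z * ‖deriv f (ρ * φ z)‖ * ‖deriv φ z‖ * K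
      = μ z * m * ‖φ z‖ ^ (m - 1) * ‖deriv φ z‖ * (vLog ‖φ z‖ * ‖deriv f (ρ * φ z)‖) := by ring
    _ ≤ B * S * 1 :=
      mul_le_mul hφ' hf' (by have := vLog_pos (norm_nonneg _) hs1; positivity) (hφ'0.trans hφ')
    _ ≤ B * (3 / (2 * exp 1) * log (m + 1)) := by
      rw [mul_one]
      exact mul_le_mul_of_nonneg_left (hFm m hlm).le hB0
    _ ≤ B * (3 * exp (L - 1) / L * K) := mul_le_mul_of_nonneg_left hlog hB0
    _ = 3 * exp (L - 1) / L * B * K := by ring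

/-- With `L = 1 - 1/log 3` and `r_l = 1 - L/(l+L)`: let `μ` be a weight on `𝔻`,
`φ` a holomorphic self-map of `𝔻`, `l ≥ 1` with `‖F_m‖_log < (3/(2e)) * log (m+1)`
for all `m ≥ l`, and `B` with `‖φ^m‖_μ ≤ B * ‖F_m‖_log` for all `m ≥ l` (the latter
stated pointwise in `z`, which is equivalent). Then for every `ρ ∈ [0,1]`, every
holomorphic `f` on `𝔻` with `|f 0| + ‖f‖_log ≤ 1` (stated pointwise), and every
`z ∈ 𝔻` with `|φ z| > r_l`, one has
`μ z * |f' (ρ * φ z)| * |φ' z| ≤ (3 * e^(L-1) / L) * B`. -/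
theorem stmt_13
    (L : ℝ) (hL : L = 1 - 1 / Real.log 3)
    (μ : ℂ → ℝ) (hμc : ContinuousOn μ (Metric.ball (0 : ℂ) 1))
    (hμb : ∃ M : ℝ, ∀ z ∈ Metric.ball (0 : ℂ) 1, μ z ≤ M)
    (hμp : ∀ z ∈ Metric.ball (0 : ℂ) 1, 0 < μ z)
    (φ : ℂ → ℂ) (hφd : DifferentiableOn ℂ φ (Metric.ball (0 : ℂ) 1))
    (hφm : Set.MapsTo φ (Metric.ball (0 : ℂ) 1) (Metric.ball (0 : ℂ) 1))
    (l : ℕ) (hl : 1 ≤ l)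
    (hFm : ∀ m : ℕ, l ≤ m →
      sSup ((fun z : ℂ => (1 - ‖z‖) * Real.log (3 / (1 - ‖z‖)) *
        (m : ℝ) * ‖z‖ ^ (m - 1)) '' Metric.ball (0 : ℂ) 1) <
      (3 / (2 * Real.exp 1)) * Real.log ((m : ℝ) + 1))
    (B : ℝ)
    (hB : ∀ m : ℕ, l ≤ m → ∀ z ∈ Metric.ball (0 : ℂ) 1,
      μ z * m * ‖φ z‖ ^ (m - 1) * ‖deriv φ z‖ ≤
      B * sSup ((fun z : ℂ => (1 - ‖z‖) * Real.log (3 / (1 - ‖z‖)) *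
        (m : ℝ) * ‖z‖ ^ (m - 1)) '' Metric.ball (0 : ℂ) 1)) :
    ∀ ρ ∈ Set.Icc (0 : ℝ) 1, ∀ f : ℂ → ℂ,
      DifferentiableOn ℂ f (Metric.ball (0 : ℂ) 1) →
      (∀ z ∈ Metric.ball (0 : ℂ) 1,
        ‖f 0‖ + (1 - ‖z‖) * Real.log (3 / (1 - ‖z‖)) *
          ‖deriv f z‖ ≤ 1) →
      ∀ z ∈ Metric.ball (0 : ℂ) 1, 1 - L / ((l : ℝ) + L) < ‖φ z‖ →
        μ z * ‖deriv f ((ρ : ℂ) * φ z)‖ * ‖deriv φ z‖ ≤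
        (3 * Real.exp (L - 1) / L) * B :=
  stmt_13_general L hL μ hμp φ hφm l hl hFm B hB
end
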